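/- For an Alexandrov space X of finite height, the Krull dimension of X equals the height of X. -/

import Mathlib

/-!
In an Alexandrov space every point `x` has a smallest open neighbourhood, the set of its
generalizations. Hence any two points of an irreducible set `T` have a common generalization in
`T`: the point closures of points of `T` form a directed family. Finite height makes this family
have a largest member `closure {w}`, which then equals `T` when `T` is closed. So the space is
quasi-sober, and in a quasi-sober space the irreducible closed sets are exactly the point closures.
-/

/-- The height of a topological space: the supremum of lengths of strictly
increasing chains of point closures, as an element of `WithBot ℕ∞`. -/
noncomputable def topHeight (X : Type*) [TopologicalSpace X] : WithBot ℕ∞ :=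
  Order.krullDim {S : Set X // ∃ x : X, S = closure {x}}

open Order TopologicalSpace Topology

lemma Order.wellFoundedGT_of_krullDim_ne_top {α : Type*} [Preorder α] (h : krullDim α ≠ ⊤) :
    WellFoundedGT α := by
  refine ⟨RelEmbedding.wellFounded_iff_isEmpty.2 ⟨fun f ↦ h ?_⟩⟩
  have hf : StrictMono f := fun _ _ hmn ↦ f.map_rel_iff.2 hmn
  exact top_le_iff.1 (krullDim_nat ▸ krullDim_le_of_strictMono f hf)

lemma DirectedOn.exists_isGreatest_of_wellFoundedGT {α : Type*} [Preorder α] [WellFoundedGT α]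
    {s : Set α} (hd : DirectedOn (· ≤ ·) s) (hs : s.Nonempty) : ∃ m, IsGreatest s m := by
  obtain ⟨m, hm⟩ := exists_maximal_of_wellFoundedGT (· ∈ s) hs
  exact ⟨m, hm.prop, hd.is_top_of_is_max hm.prop fun _ ha hma ↦ hm.le_of_ge ha hma⟩

section

variable {X : Type*} [TopologicalSpace X]

lemma IsPreirreducible.exists_specializes_specializes [AlexandrovDiscrete X] {T : Set X}
    (hT : IsPreirreducible T) {x y : X} (hx : x ∈ T) (hy : y ∈ T) :
    ∃ z ∈ T, z ⤳ x ∧ z ⤳ y := by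
  obtain ⟨z, hzT, hzx, hzy⟩ := hT _ _ (isOpen_nhdsKer (s := {x})) (isOpen_nhdsKer (s := {y}))
    ⟨x, hx, subset_nhdsKer rfl⟩ ⟨y, hy, subset_nhdsKer rfl⟩
  exact ⟨z, hzT, mem_nhdsKer_singleton.1 hzx, mem_nhdsKer_singleton.1 hzy⟩

lemma quasiSober_of_topHeight_ne_top [AlexandrovDiscrete X] (h : topHeight X ≠ ⊤) :
    QuasiSober X where
  sober {T} hT hTc := by
    have := wellFoundedGT_of_krullDim_ne_top h
    let pointClosure : T → {S : Set X // ∃ x : X, S = closure {x}} :=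
      fun x ↦ ⟨closure {(x : X)}, x, rfl⟩
    have hdir : Directed (· ≤ ·) pointClosure := fun x y ↦ by
      obtain ⟨z, hzT, hzx, hzy⟩ := hT.2.exists_specializes_specializes x.2 y.2
      exact ⟨⟨z, hzT⟩, specializes_iff_closure_subset.1 hzx, specializes_iff_closure_subset.1 hzy⟩
    obtain ⟨_, ⟨w, rfl⟩, hw⟩ := (directedOn_range.2 hdir).exists_isGreatest_of_wellFoundedGT
      (Set.range_nonempty_iff_nonempty.2 hT.1.to_subtype)
    refine ⟨w, (hTc.closure_subset_iff.2 (Set.singleton_subset_iff.2 w.2)).antisymm fun y hy ↦ ?_⟩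
    exact (hw ⟨⟨y, hy⟩, rfl⟩ : closure {y} ⊆ closure {(w : X)}) (subset_closure rfl)

lemma setOf_isIrreducible_and_isClosed_eq [QuasiSober X] :
    {S : Set X | IsIrreducible S ∧ IsClosed S} = {S | ∃ x, S = closure {x}} := by
  ext S
  refine ⟨fun ⟨hirr, hcl⟩ ↦ ?_, ?_⟩
  · obtain ⟨x, hx⟩ := QuasiSober.sober hirr hcl
    exact ⟨x, hx.symm⟩
  · rintro ⟨x, rfl⟩
    exact ⟨isIrreducible_singleton.closure, isClosed_closure⟩

theorem topologicalKrullDim_eq_topHeight_of_quasiSober [QuasiSober X] :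
    topologicalKrullDim X = topHeight X :=
  krullDim_eq_of_orderIso <| (IrreducibleCloseds.orderIsoSubtype X).trans <|
    OrderIso.setCongr _ _ setOf_isIrreducible_and_isClosed_eq

end

/-- For an Alexandrov space of finite height, the Krull dimension equals the height. -/
theorem topologicalKrullDim_eq_topHeight {X : Type*} [TopologicalSpace X]
    [AlexandrovDiscrete X] (hfin : topHeight X ≠ ⊤) :
    topologicalKrullDim X = topHeight X :=
  have := quasiSober_of_topHeight_ne_top hfin
  topologicalKrullDim_eq_topHeight_of_quasiSober
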